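/- arXiv:1802.07654 — 4 statements merged into one kernel-verified Lean document; each statement's English description precedes it below -/
import Mathlib

section
/- Let (ωₙ)ₙ∈ℕ be a sequence of nonempty positive words over the alphabet {a,b} such that for all m ≠ n, ωₘ is not an initial segment of ωₙ. For each n let τₙ denote the reverse of ωₙ, and let gₙ ∈ F₂ be the element obtained by reading the concatenated word ωₙτₙ in the free group F₂ on a,b. Then the family (gₙ)ₙ∈ℕ freely generates: the group homomorphism FreeGroup ℕ → F₂ sending the n-th free generator to gₙ is injective. -/
/-- A positive word over the alphabet `{a, b}` (encoded as `Fin 2`) read as an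
element of the free group `F₂ = FreeGroup (Fin 2)`. -/
def wordToF2 (w : List (Fin 2)) : FreeGroup (Fin 2) :=
  (w.map FreeGroup.of).prod

namespace Stmt2Aux

/-- A non-cancelling adjacent pair of letters. -/
def Gd {α : Type*} (a b : α × Bool) : Prop := a.1 = b.1 → a.2 = b.2

/-- The letters of a positive word, all with sign `ε`. -/
def lw {α : Type*} (ε : Bool) (w : List α) : List (α × Bool) := w.map (fun x => (x, ε))

@[simp] lemma lw_nil {α : Type*} (ε : Bool) : lw ε ([] : List α) = [] := rfl

@[simp] lemma lw_cons {α : Type*} (ε : Bool) (a : α) (l : List α) :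
    lw ε (a :: l) = (a, ε) :: lw ε l := rfl

@[simp] lemma lw_append {α : Type*} (ε : Bool) (l₁ l₂ : List α) :
    lw ε (l₁ ++ l₂) = lw ε l₁ ++ lw ε l₂ := List.map_append

lemma reduce_eq_self {α : Type*} [DecidableEq α] {l : List (α × Bool)} (h : l.Chain' Gd) :
    FreeGroup.reduce l = l := by
  induction l with
  | nil => rfl
  | cons a l ih =>
    have ht : FreeGroup.reduce l = l := ih h.tail
    rw [FreeGroup.reduce.cons, ht]
    cases l with
    | nil => rfl
    | cons b t =>
      have hg : Gd a b := (List.isChain_cons_cons.mp h).1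
      simp only
      rw [if_neg]
      rintro ⟨h1, h2⟩
      have := hg h1
      rw [this] at h2
      simp at h2

lemma chain'_of_no_cancel {α : Type*} : ∀ {l : List (α × Bool)},
    (∀ (L₂ L₃ : List (α × Bool)) (x : α) (b : Bool), l ≠ L₂ ++ (x, b) :: (x, !b) :: L₃) →
    l.Chain' Gd
  | [], _ => List.isChain_nil
  | [a], _ => List.isChain_singleton a
  | a :: b :: t, h => by
    refine List.isChain_cons_cons.mpr ⟨?_, ?_⟩
    · intro h1
      by_contra h2
      have hb : b.2 = !a.2 := by cases ha2 : a.2 <;> cases hb2 : b.2 <;> simp_all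
      refine h [] t a.1 a.2 ?_
      have : b = (a.1, !a.2) := by
        rw [Prod.ext_iff]; exact ⟨h1.symm, hb⟩
      rw [← this]
      rfl
    · exact chain'_of_no_cancel (fun L₂ L₃ x c hEq => h (a :: L₂) L₃ x c (by rw [hEq]; rfl))

lemma chain'_reduce {α : Type*} [DecidableEq α] (l : List (α × Bool)) :
    (FreeGroup.reduce l).Chain' Gd :=
  chain'_of_no_cancel (fun _ _ _ _ h => FreeGroup.reduce.not h)

lemma mk_cons_cancel {α : Type*} (x : α) (b : Bool) (l : List (α × Bool)) :
    FreeGroup.mk ((x, b) :: (x, !b) :: l) = FreeGroup.mk l := by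
  rw [← FreeGroup.quot_mk_eq_mk, ← FreeGroup.quot_mk_eq_mk]
  exact Quot.sound (@FreeGroup.Red.Step.not _ [] l x b)

lemma mk_lw_cancel {α : Type*} (ε : Bool) :
    ∀ (l : List α), FreeGroup.mk (lw ε l ++ lw (!ε) l.reverse) = 1
  | [] => by simp [FreeGroup.one_eq_mk]
  | a :: l => by
    have hl : lw ε (a :: l) ++ lw (!ε) (a :: l).reverse
        = (a, ε) :: ((lw ε l ++ lw (!ε) l.reverse) ++ [(a, !ε)]) := by
      simp [List.reverse_cons]
    rw [hl]
    have h1 : FreeGroup.mk ((a, ε) :: ((lw ε l ++ lw (!ε) l.reverse) ++ [(a, !ε)]))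
        = FreeGroup.mk [(a, ε)] *
          (FreeGroup.mk (lw ε l ++ lw (!ε) l.reverse) * FreeGroup.mk [(a, !ε)]) := by
      rw [FreeGroup.mul_mk, FreeGroup.mul_mk]
      rfl
    rw [h1, mk_lw_cancel ε l, one_mul, FreeGroup.mul_mk]
    show FreeGroup.mk ((a, ε) :: (a, !ε) :: []) = 1
    rw [mk_cons_cancel, ← FreeGroup.one_eq_mk]

lemma mk_middle_cancel {α : Type*} (ε : Bool) (p : List α) (C D : List (α × Bool)) :
    FreeGroup.mk (C ++ (lw ε p.reverse ++ lw (!ε) p) ++ D) = FreeGroup.mk (C ++ D) := by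
  have hM : FreeGroup.mk (lw ε p.reverse ++ lw (!ε) p) = 1 := by
    have := mk_lw_cancel ε p.reverse
    rwa [List.reverse_reverse] at this
  have h1 : FreeGroup.mk (C ++ (lw ε p.reverse ++ lw (!ε) p) ++ D)
      = FreeGroup.mk C * (FreeGroup.mk (lw ε p.reverse ++ lw (!ε) p) * FreeGroup.mk D) := by
    rw [FreeGroup.mul_mk, FreeGroup.mul_mk, List.append_assoc]
  rw [h1, hM, one_mul, FreeGroup.mul_mk]

lemma chain'_lw_append {α : Type*} (ε : Bool) (A : List α) {B : List (α × Bool)}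
    (hB : B.Chain' Gd) (hhd : ∀ c ∈ B.head?, (c : α × Bool).2 = ε) :
    (lw ε A ++ B).Chain' Gd := by
  induction A with
  | nil => simpa using hB
  | cons a A ih =>
    refine List.isChain_cons.mpr ⟨?_, ih⟩
    intro y hy
    have hy2 : y.2 = ε := by
      cases A with
      | nil => exact hhd y (by simpa using hy)
      | cons a' A' =>
        have hy' : some ((a', ε) : α × Bool) = some y := hy
        rw [← Option.some.inj hy']
    exact fun _ => hy2.symm

lemma wordToF2_eq (w : List (Fin 2)) : wordToF2 w = FreeGroup.mk (lw true w) := by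
  induction w with
  | nil => simp [wordToF2, lw, FreeGroup.one_eq_mk]
  | cons a w ih =>
    have : wordToF2 (a :: w) = FreeGroup.of a * wordToF2 w := by simp [wordToF2]
    rw [this, ih, show FreeGroup.of a = FreeGroup.mk [(a, true)] from rfl,
      FreeGroup.mul_mk]
    rfl

lemma lift_gen (ω : ℕ → List (Fin 2)) (n : ℕ) (ε : Bool) :
    FreeGroup.lift (fun k => wordToF2 (ω k ++ (ω k).reverse)) (FreeGroup.mk [(n, ε)])
      = FreeGroup.mk (lw ε (ω n ++ (ω n).reverse)) := by
  cases ε with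
  | true =>
    rw [show FreeGroup.mk [(n, true)] = FreeGroup.of n from rfl, FreeGroup.lift_apply_of,
      wordToF2_eq]
  | false =>
    have h1 : FreeGroup.mk [(n, false)] = (FreeGroup.of n)⁻¹ := by
      rw [show FreeGroup.of n = FreeGroup.mk [(n, true)] from rfl, FreeGroup.inv_mk]
      rfl
    rw [h1, map_inv, FreeGroup.lift_apply_of, wordToF2_eq, FreeGroup.inv_mk]
    congr 1
    have hrev : (ω n ++ (ω n).reverse).reverse = ω n ++ (ω n).reverse := by
      rw [List.reverse_append, List.reverse_reverse]
    simp only [FreeGroup.invRev, lw, List.map_map]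
    rw [← List.map_reverse, hrev]
    rfl

lemma prefix_split {α : Type*} : ∀ (A B : List α), ¬ A <+: B → ¬ B <+: A →
    ∃ p x u y v, A = p ++ x :: u ∧ B = p ++ y :: v ∧ x ≠ y
  | [], _, hA, _ => absurd (List.nil_prefix) hA
  | _ :: _, [], _, hB => absurd (List.nil_prefix) hB
  | a :: A, b :: B, hA, hB => by
    by_cases hab : a = b
    · subst hab
      obtain ⟨p, x, u, y, v, h1, h2, h3⟩ := prefix_split A B
        (fun h => hA (List.cons_prefix_cons.mpr ⟨rfl, h⟩))
        (fun h => hB (List.cons_prefix_cons.mpr ⟨rfl, h⟩))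
      exact ⟨a :: p, x, u, y, v, by simp [h1], by simp [h2], h3⟩
    · exact ⟨[], a, A, b, B, rfl, rfl, hab⟩

lemma main (ω : ℕ → List (Fin 2)) (hne : ∀ n, ω n ≠ [])
    (hpre : ∀ m n, m ≠ n → ¬ ω m <+: ω n) :
    ∀ (L : List (ℕ × Bool)) (n : ℕ) (ε : Bool), ((n, ε) :: L).Chain' Gd →
    ∃ rest, FreeGroup.lift (fun k => wordToF2 (ω k ++ (ω k).reverse))
          (FreeGroup.mk ((n, ε) :: L))
        = FreeGroup.mk (lw ε (ω n) ++ rest)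
      ∧ (lw ε (ω n) ++ rest).Chain' Gd
  | [], n, ε, _ => by
    refine ⟨lw ε (ω n).reverse, ?_, ?_⟩
    · rw [lift_gen, lw_append]
    · have := chain'_lw_append ε (ω n ++ (ω n).reverse) (B := []) List.isChain_nil
        (by simp)
      simpa using this
  | (n', ε') :: L, n, ε, h => by
    obtain ⟨rest', hmk, hch⟩ := main ω hne hpre L n' ε' (List.isChain_cons_cons.mp h).2
    have hsplit : FreeGroup.mk ((n, ε) :: (n', ε') :: L)
        = FreeGroup.mk [(n, ε)] * FreeGroup.mk ((n', ε') :: L) := by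
      rw [FreeGroup.mul_mk]; rfl
    rw [hsplit, map_mul, hmk, lift_gen, FreeGroup.mul_mk]
    by_cases hee : ε' = ε
    · subst hee
      refine ⟨lw ε' (ω n).reverse ++ (lw ε' (ω n') ++ rest'), ?_, ?_⟩
      · congr 1
        simp [List.append_assoc]
      · have hhd : ∀ c ∈ (lw ε' (ω n') ++ rest').head?, (c : Fin 2 × Bool).2 = ε' := by
          cases hω : ω n' with
          | nil => exact absurd hω (hne n')
          | cons a t =>
            intro c hc
            have hc' : some ((a, ε') : Fin 2 × Bool) = some c := hc
            rw [← Option.some.inj hc']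
        have := chain'_lw_append ε' (ω n ++ (ω n).reverse) hch hhd
        simpa [List.append_assoc] using this
    · have hbe : ε' = !ε := by cases ε <;> cases ε' <;> simp_all
      subst hbe
      have hnn : n ≠ n' := by
        intro hn
        have := (List.isChain_cons_cons.mp h).1 (by rw [hn])
        simp at this
      obtain ⟨p, x, u, y, v, hA, hB, hxy⟩ := prefix_split (ω n) (ω n')
        (hpre n n' hnn) (hpre n' n hnn.symm)
      refine ⟨lw ε (u.reverse ++ [x]) ++ ((y, !ε) :: (lw (!ε) v ++ rest')), ?_, ?_⟩
      · have hlist : lw ε (ω n ++ (ω n).reverse) ++ (lw (!ε) (ω n') ++ rest')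
            = (lw ε (ω n) ++ lw ε (u.reverse ++ [x]))
              ++ (lw ε p.reverse ++ lw (!ε) p)
              ++ ((y, !ε) :: (lw (!ε) v ++ rest')) := by
          rw [hA, hB]
          simp [List.reverse_append, List.append_assoc]
        rw [hlist, mk_middle_cancel]
        congr 1
        simp [List.append_assoc]
      · have hch' : List.Chain' Gd
            (lw (!ε) p ++ ((y, !ε) :: (lw (!ε) v ++ rest'))) := by
          have := hch
          rw [hB] at this
          simpa [List.append_assoc] using this
        have hB0 := hch'.right_of_append
        have hB1 : List.Chain' Gd ((x, ε) :: (y, !ε) :: (lw (!ε) v ++ rest')) :=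
          List.isChain_cons_cons.mpr ⟨fun hf => absurd hf hxy, hB0⟩
        have := chain'_lw_append ε (ω n ++ u.reverse) hB1 (by simp)
        simpa [List.append_assoc] using this

end Stmt2Aux

open Stmt2Aux in
/-- If `(ωₙ)` is a sequence of nonempty positive words none of which is a
prefix of another, then the elements `gₙ = ωₙτₙ` (with `τₙ` the reverse of
`ωₙ`) freely generate: the induced homomorphism `FreeGroup ℕ → F₂` is
injective. -/
theorem stmt_2 (ω : ℕ → List (Fin 2)) (hne : ∀ n, ω n ≠ [])
    (hpre : ∀ m n, m ≠ n → ¬ ω m <+: ω n) :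
    Function.Injective
      (FreeGroup.lift (fun n => wordToF2 (ω n ++ (ω n).reverse)) :
        FreeGroup ℕ →* FreeGroup (Fin 2)) := by
  rw [injective_iff_map_eq_one]
  intro a ha
  by_contra ha1
  have hchain : a.toWord.Chain' Gd := by
    have := chain'_reduce a.toWord
    rwa [FreeGroup.reduce_toWord] at this
  cases hW : a.toWord with
  | nil => exact ha1 (FreeGroup.toWord_eq_nil_iff.mp hW)
  | cons hd L =>
    obtain ⟨n, ε⟩ := hd
    rw [hW] at hchain
    obtain ⟨rest, hmk, hred⟩ := main ω hne hpre L n ε hchain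
    rw [← FreeGroup.mk_toWord (x := a), hW, hmk] at ha
    have h2 := congrArg FreeGroup.toWord ha
    rw [FreeGroup.toWord_mk, reduce_eq_self hred, FreeGroup.toWord_one] at h2
    cases hω : ω n with
    | nil => exact hne n hω
    | cons b t =>
      rw [hω] at h2
      simp at h2
end

section
/- Let (ωₙ)ₙ∈ℕ be a sequence of nonempty positive words over the alphabet {a,b} such that for all m ≠ n, ωₘ is not an initial segment of ωₙ. For each n let τₙ denote the reverse of ωₙ, and let θₙ ∈ F₂ be the element obtained by reading the concatenated word ω₀τ₀ω₁τ₁⋯ωₙτₙ in the free group F₂ on a,b. Let G₁ be the subgroup of F₂ generated by {θₙ : n odd} and G₂ the subgroup generated by {θₙ : n even}. Then G₁ ∩ G₂ is the trivial subgroup. -/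
open FreeGroup List

namespace Stmt5Aux

abbrev W := List (Fin 2 × Bool)

/-- signed word -/
def sgn (b : Bool) (w : List (Fin 2)) : W := w.map (fun x => (x, b))

@[simp] lemma sgn_nil (b : Bool) : sgn b [] = [] := rfl
@[simp] lemma sgn_cons (b : Bool) (x : Fin 2) (w : List (Fin 2)) :
    sgn b (x :: w) = (x, b) :: sgn b w := rfl
@[simp] lemma sgn_append (b : Bool) (u v : List (Fin 2)) :
    sgn b (u ++ v) = sgn b u ++ sgn b v := List.map_append
@[simp] lemma sgn_length (b : Bool) (w : List (Fin 2)) : (sgn b w).length = w.length :=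
  List.length_map _

/-- non-cancelling adjacency -/
def Nc (a c : Fin 2 × Bool) : Prop := c ≠ (a.1, !a.2)

lemma chain'_sgn (b : Bool) (w : List (Fin 2)) : List.Chain' Nc (sgn b w) := by
  induction w with
  | nil => exact List.isChain_nil
  | cons x t ih =>
    simp only [List.Chain']
    rw [sgn_cons, List.isChain_cons]
    refine ⟨?_, ih⟩
    intro y hy
    have h2 : y.2 = b := by
      cases t with
      | nil => simp at hy
      | cons z t' =>
        simp only [sgn_cons, List.head?_cons, Option.mem_def, Option.some.injEq] at hy
        rw [← hy]
    intro h
    rw [h] at h2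
    simp at h2

lemma reduce_eq_self_of_chain {w : W} (h : List.Chain' Nc w) : reduce w = w := by
  induction w with
  | nil => simp
  | cons x t ih =>
    have ht : List.Chain' Nc t := h.tail
    rw [reduce.cons, ih ht]
    cases t with
    | nil => rfl
    | cons y t' =>
      have hnc : Nc x y := (List.isChain_cons_cons.mp h).1
      have : ¬ (x.1 = y.1 ∧ x.2 = !y.2) := by
        rintro ⟨h1, h2⟩
        apply hnc
        have hy2 : y.2 = !x.2 := by rw [h2]; simp
        rw [h1, ← hy2]
      simp [this]

lemma chain_of_reduce : ∀ {w : W}, reduce w = w → List.Chain' Nc w := by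
  intro w
  induction w with
  | nil => intro; exact List.isChain_nil
  | cons x t ih =>
    intro h
    rw [reduce.cons] at h
    cases hrt : reduce t with
    | nil =>
      rw [hrt] at h
      simp at h
      -- h : [x] = x :: t  so t = []
      have : t = [] := by cases t <;> simp_all
      subst this; simp [List.Chain']
    | cons y t' =>
      rw [hrt] at h
      have h : (if x.1 = y.1 ∧ x.2 = !y.2 then t' else x :: y :: t') = x :: t := h
      by_cases hc : x.1 = y.1 ∧ x.2 = !y.2
      · rw [if_pos hc] at h
        -- h : t' = x :: t, but |t'| < |reduce t| ≤ |t|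
        exfalso
        have h1 : (reduce t).length ≤ t.length := (FreeGroup.reduce.red (L := t)).length_le
        rw [hrt] at h1
        simp at h1
        have := congrArg List.length h
        simp at this
        omega
      · rw [if_neg hc] at h
        -- h : x :: y :: t' = x :: t, so t = y :: t' = reduce t
        have ht : t = y :: t' := by
          injection h with _ h2
          exact h2.symm
        simp only [List.Chain']
        rw [List.isChain_cons]
        constructor
        · intro z hz
          rw [ht] at hz
          simp at hz
          subst hz
          intro hy
          apply hc
          rw [hy]
          simp
        · exact ih (by rw [ht] at hrt ⊢; exact hrt)

end Stmt5Aux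

namespace Stmt5Aux

lemma toWord_mk_of_chain {w : W} (h : List.Chain' Nc w) : (FreeGroup.mk w).toWord = w := by
  rw [FreeGroup.toWord_mk, reduce_eq_self_of_chain h]

lemma chain'_toWord (g : FreeGroup (Fin 2)) : List.Chain' Nc g.toWord :=
  chain_of_reduce (FreeGroup.reduce_toWord g)

lemma cancel_pair (x : Fin 2) (b : Bool) (A u' : W) :
    FreeGroup.mk (A ++ (x, b) :: (x, !b) :: u') = FreeGroup.mk (A ++ u') := by
  have h1 : A ++ (x, b) :: (x, !b) :: u' = (A ++ [(x, b)]) ++ ([(x, !b)] ++ u') := by simp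
  have h2 : FreeGroup.mk [(x, !b)] = (FreeGroup.mk [(x, b)])⁻¹ := by
    rw [FreeGroup.inv_mk]; simp [FreeGroup.invRev]
  rw [h1, ← FreeGroup.mul_mk, ← FreeGroup.mul_mk (L₁ := A) (L₂ := [(x,b)]),
    ← FreeGroup.mul_mk (L₁ := [(x, !b)]) (L₂ := u'),
    ← FreeGroup.mul_mk (L₁ := A) (L₂ := u'), h2]
  group

lemma core (b : Bool) : ∀ (s p : List (Fin 2)) (u : W), List.Chain' Nc u →
    ¬ (sgn (!b) s <+: u) → ∃ w, List.Chain' Nc w ∧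
      FreeGroup.mk (sgn b (p ++ s.reverse) ++ u) = FreeGroup.mk w ∧ sgn b p <+: w := by
  intro s
  induction s with
  | nil => intro p u _ hpre; exact absurd (List.nil_prefix) hpre
  | cons x s' ih =>
    intro p u hu hpre
    by_cases hy : ∃ u', u = (x, !b) :: u'
    · obtain ⟨u', rfl⟩ := hy
      have hu' : List.Chain' Nc u' := hu.tail
      have hpre' : ¬ (sgn (!b) s' <+: u') := by
        intro hp
        exact hpre (List.cons_prefix_cons.mpr ⟨rfl, hp⟩)
      obtain ⟨w, hw1, hw2, hw3⟩ := ih p u' hu' hpre'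
      refine ⟨w, hw1, ?_, hw3⟩
      have harr : sgn b (p ++ (x :: s').reverse) ++ (x, !b) :: u'
          = (sgn b (p ++ s'.reverse)) ++ (x, b) :: (x, !b) :: u' := by
        simp [List.reverse_cons]
      rw [harr, cancel_pair, ← hw2]
    · refine ⟨sgn b (p ++ (x :: s').reverse) ++ u, ?_, rfl, ?_⟩
      · simp only [List.Chain']
        rw [List.isChain_append]
        refine ⟨chain'_sgn _ _, hu, ?_⟩
        intro z hz y hy2
        have hz' : z = (x, b) := by
          have harr : sgn b (p ++ (x :: s').reverse) = sgn b (p ++ s'.reverse) ++ [(x, b)] := by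
            simp [List.reverse_cons]
          rw [harr, List.getLast?_concat] at hz
          simpa using hz.symm
        subst hz'
        intro hcon
        apply hy
        cases u with
        | nil => simp at hy2
        | cons zz u' =>
          refine ⟨u', ?_⟩
          simp only [List.head?_cons, Option.mem_def, Option.some.injEq] at hy2
          rw [hy2, hcon]
      · exact ⟨sgn b ((x :: s').reverse) ++ u, by simp⟩

end Stmt5Aux

namespace Stmt5Aux

lemma wordToF2_eq_mk (w : List (Fin 2)) : wordToF2 w = FreeGroup.mk (sgn true w) := by
  induction w with
  | nil => rw [wordToF2]; simp [sgn]; rfl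
  | cons x t ih =>
    show (List.map FreeGroup.of (x :: t)).prod = _
    rw [List.map_cons, List.prod_cons]
    rw [show ((List.map FreeGroup.of t).prod : FreeGroup (Fin 2)) = wordToF2 t from rfl, ih]
    rw [show (FreeGroup.of x : FreeGroup (Fin 2)) = FreeGroup.mk [(x, true)] from rfl,
      FreeGroup.mul_mk]
    rfl

lemma wordToF2_append (u v : List (Fin 2)) :
    wordToF2 (u ++ v) = wordToF2 u * wordToF2 v := by
  simp [wordToF2, List.map_append, List.prod_append]

lemma prefix_total {γ : Type*} {u v w : List γ} (h1 : u <+: w) (h2 : v <+: w) :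
    u <+: v ∨ v <+: u := by
  rcases le_total u.length v.length with h | h
  · left
    have e1 := List.prefix_iff_eq_take.mp h1
    have e2 := List.prefix_iff_eq_take.mp h2
    rw [List.prefix_iff_eq_take, e2, List.take_take, min_eq_left h, ← e1]
  · right
    have e1 := List.prefix_iff_eq_take.mp h1
    have e2 := List.prefix_iff_eq_take.mp h2
    rw [List.prefix_iff_eq_take, e1, List.take_take, min_eq_left h, ← e2]

lemma prefix_of_sgn_prefix {b : Bool} {u v : List (Fin 2)} (h : sgn b u <+: sgn b v) :
    u <+: v := by
  have e := List.prefix_iff_eq_take.mp h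
  rw [sgn_length] at e
  rw [show (sgn b v).take u.length = sgn b (v.take u.length) from (List.map_take).symm] at e
  have hinj : Function.Injective (fun x : Fin 2 => (x, b)) := by
    intro a c hac; simpa using congrArg Prod.fst hac
  have := List.map_injective_iff.mpr hinj e
  rw [List.prefix_iff_eq_take]
  exact this

lemma invRev_sgn_pal (u : List (Fin 2)) :
    FreeGroup.invRev (sgn true (u ++ u.reverse)) = sgn false (u ++ u.reverse) := by
  have h1 : ∀ v : List (Fin 2), FreeGroup.invRev (sgn true v) = sgn false v.reverse := by
    intro v
    unfold FreeGroup.invRev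
    rw [sgn, sgn, List.map_map, ← List.map_reverse]
    rfl
  rw [h1, List.reverse_append, List.reverse_reverse]

end Stmt5Aux

namespace Stmt5Aux

open Pointwise

theorem lift_blocks_injective (ω : ℕ → List (Fin 2)) (hne : ∀ n, ω n ≠ [])
    (hpre : ∀ m n, m ≠ n → ¬ ω m <+: ω n) :
    Function.Injective (FreeGroup.lift (fun n => wordToF2 (ω n ++ (ω n).reverse))) := by
  set a : ℕ → FreeGroup (Fin 2) := fun n => wordToF2 (ω n ++ (ω n).reverse) with ha
  set X : ℕ → Set (FreeGroup (Fin 2)) := fun n => {g | sgn true (ω n) <+: g.toWord} with hXdef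
  set Y : ℕ → Set (FreeGroup (Fin 2)) := fun n => {g | sgn false (ω n) <+: g.toWord} with hYdef
  have key : ∀ (b : Bool) (n : ℕ) (h : FreeGroup (Fin 2)),
      ¬ (sgn (!b) (ω n) <+: h.toWord) →
      sgn b (ω n) <+: (FreeGroup.mk (sgn b (ω n ++ (ω n).reverse)) * h).toWord := by
    intro b n h hh
    obtain ⟨w, hw1, hw2, hw3⟩ := core b (ω n) (ω n) h.toWord (chain'_toWord h) hh
    have heq : FreeGroup.mk (sgn b (ω n ++ (ω n).reverse)) * h = FreeGroup.mk w := by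
      conv_lhs => rw [← FreeGroup.mk_toWord (x := h)]
      rw [FreeGroup.mul_mk, hw2]
    rw [heq, toWord_mk_of_chain hw1]
    exact hw3
  have hdisj : ∀ (b : Bool), _root_.Pairwise (Function.onFun _root_.Disjoint fun n => ({g : FreeGroup (Fin 2) | sgn b (ω n) <+: g.toWord} : Set (FreeGroup (Fin 2)))) := by
    intro b m n hmn
    rw [Function.onFun, Set.disjoint_left]
    intro g hgm hgn
    rcases prefix_total hgm hgn with h | h
    · exact hpre m n hmn (prefix_of_sgn_prefix h)
    · exact hpre n m (Ne.symm hmn) (prefix_of_sgn_prefix h)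
  apply FreeGroup.injective_lift_of_ping_pong a X Y
  · -- nonempty
    intro n
    refine ⟨FreeGroup.mk (sgn true (ω n)), ?_⟩
    show sgn true (ω n) <+: _
    rw [toWord_mk_of_chain (chain'_sgn _ _)]
  · exact hdisj true
  · exact hdisj false
  · -- X i disjoint Y j
    intro i j
    rw [Set.disjoint_left]
    intro g hgi hgj
    have hgi' : sgn true (ω i) <+: g.toWord := hgi
    have hgj' : sgn false (ω j) <+: g.toWord := hgj
    obtain ⟨x, r, hx⟩ : ∃ x r, ω i = x :: r := by
      cases h : ω i with
      | nil => exact absurd h (hne i)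
      | cons x r => exact ⟨x, r, rfl⟩
    obtain ⟨y, t, hyt⟩ : ∃ y t, ω j = y :: t := by
      cases h : ω j with
      | nil => exact absurd h (hne j)
      | cons y t => exact ⟨y, t, rfl⟩
    rw [hx] at hgi'; rw [hyt] at hgj'
    obtain ⟨A, hA⟩ := hgi'
    obtain ⟨B, hB⟩ := hgj'
    rw [← hA] at hB
    simp only [sgn_cons, List.cons_append] at hB
    injection hB with h1 _
    simp at h1
  · -- a i • (Y i)ᶜ ⊆ X i
    intro n g hg
    rw [Set.mem_smul_set] at hg
    obtain ⟨h, hh, rfl⟩ := hg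
    show sgn true (ω n) <+: _
    rw [smul_eq_mul]
    have han : a n = FreeGroup.mk (sgn true (ω n ++ (ω n).reverse)) := by
      rw [ha]; exact wordToF2_eq_mk _
    rw [han]
    exact key true n h (by simpa [hYdef] using hh)
  · -- a⁻¹ i • (X i)ᶜ ⊆ Y i
    intro n g hg
    rw [Set.mem_smul_set] at hg
    obtain ⟨h, hh, rfl⟩ := hg
    show sgn false (ω n) <+: _
    rw [smul_eq_mul]
    have hainv : a⁻¹ n = FreeGroup.mk (sgn false (ω n ++ (ω n).reverse)) := by
      show (a n)⁻¹ = _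
      rw [ha]
      show (wordToF2 _)⁻¹ = _
      rw [wordToF2_eq_mk, FreeGroup.inv_mk, invRev_sgn_pal]
    rw [hainv]
    exact key false n h (by simpa [hXdef] using hh)

end Stmt5Aux

namespace Stmt5Aux

def tProd (n : ℕ) : FreeGroup ℕ := ((List.range (n+1)).map FreeGroup.of).prod

def Ahom : FreeGroup ℕ →* FreeGroup ℕ := FreeGroup.lift tProd

def Bgen : ℕ → FreeGroup ℕ
  | 0 => FreeGroup.of 0
  | (m+1) => (FreeGroup.of m)⁻¹ * FreeGroup.of (m+1)

def Bhom : FreeGroup ℕ →* FreeGroup ℕ := FreeGroup.lift Bgen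

lemma tProd_succ (m : ℕ) : tProd (m+1) = tProd m * FreeGroup.of (m+1) := by
  rw [tProd, tProd, List.range_succ]
  simp [List.map_append, List.prod_append]

lemma B_tProd (n : ℕ) : Bhom (tProd n) = FreeGroup.of n := by
  induction n with
  | zero =>
    have : tProd 0 = FreeGroup.of 0 := by simp [tProd, List.range_succ]
    rw [this, Bhom, FreeGroup.lift_apply_of]
    rfl
  | succ m ih =>
    rw [tProd_succ, _root_.map_mul, ih, Bhom, FreeGroup.lift_apply_of]
    rw [show Bgen (m+1) = (FreeGroup.of m)⁻¹ * FreeGroup.of (m+1) from rfl]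
    group

lemma A_inj : Function.Injective Ahom := by
  have hcomp : Bhom.comp Ahom = MonoidHom.id _ := by
    apply FreeGroup.ext_hom
    intro n
    rw [MonoidHom.comp_apply, MonoidHom.id_apply, Ahom, FreeGroup.lift_apply_of, B_tProd]
  intro x y h
  have hx := congrArg Bhom h
  rw [← MonoidHom.comp_apply, ← MonoidHom.comp_apply, hcomp, MonoidHom.id_apply,
    MonoidHom.id_apply] at hx
  exact hx

lemma free_closure_disjoint :
    Subgroup.closure (FreeGroup.of '' {n : ℕ | Odd n}) ⊓
      Subgroup.closure (FreeGroup.of '' {n : ℕ | Even n}) = ⊥ := by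
  classical
  set π : FreeGroup ℕ →* FreeGroup ℕ :=
    FreeGroup.lift (fun n => if Odd n then FreeGroup.of n else 1) with hπ
  rw [eq_bot_iff]
  intro x hx
  obtain ⟨h1, h2⟩ := Subgroup.mem_inf.mp hx
  have hfix : π x = x := by
    refine Subgroup.closure_induction ?_ ?_ ?_ ?_ h1
    · rintro y ⟨n, hn, rfl⟩
      simp only [Set.mem_setOf_eq] at hn
      rw [hπ, FreeGroup.lift_apply_of, if_pos hn]
    · simp
    · intro u v _ _ hu hv; rw [_root_.map_mul, hu, hv]
    · intro u _ hu; rw [_root_.map_inv, hu]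
  have hkill : π x = 1 := by
    refine Subgroup.closure_induction ?_ ?_ ?_ ?_ h2
    · rintro y ⟨n, hn, rfl⟩
      simp only [Set.mem_setOf_eq] at hn
      rw [hπ, FreeGroup.lift_apply_of, if_neg (Nat.not_odd_iff_even.mpr hn)]
    · simp
    · intro u v _ _ hu hv; rw [_root_.map_mul, hu, hv]; simp
    · intro u _ hu; rw [_root_.map_inv, hu]; simp
  rw [Subgroup.mem_bot, ← hfix, hkill]

lemma wordToF2_flatMap (ω : ℕ → List (Fin 2)) (l : List ℕ) :
    wordToF2 (l.flatMap fun i => ω i ++ (ω i).reverse)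
      = (l.map fun i => wordToF2 (ω i ++ (ω i).reverse)).prod := by
  induction l with
  | nil => simp [wordToF2]
  | cons x t ih =>
    rw [List.flatMap_cons, wordToF2_append, ih, List.map_cons, List.prod_cons]

end Stmt5Aux

/-- If `(ωₙ)` is a sequence of nonempty positive words none of which is a
prefix of another, `τₙ` is the reverse of `ωₙ`, and
`θₙ = ω₀τ₀ω₁τ₁⋯ωₙτₙ` read in `F₂`, then the subgroup generated by the `θₙ`
with `n` odd and the subgroup generated by the `θₙ` with `n` even intersect
trivially. -/
theorem stmt_5 (ω : ℕ → List (Fin 2)) (hne : ∀ n, ω n ≠ [])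
    (hpre : ∀ m n, m ≠ n → ¬ ω m <+: ω n)
    (θ : ℕ → FreeGroup (Fin 2))
    (hθ : ∀ n, θ n =
      wordToF2 ((List.range (n + 1)).flatMap fun i => ω i ++ (ω i).reverse)) :
    Subgroup.closure (θ '' {n | Odd n}) ⊓ Subgroup.closure (θ '' {n | Even n}) = ⊥ := by
  set φ : FreeGroup ℕ →* FreeGroup (Fin 2) :=
    (FreeGroup.lift (fun n => wordToF2 (ω n ++ (ω n).reverse))).comp Stmt5Aux.Ahom with hφ
  have hφinj : Function.Injective φ :=
    (Stmt5Aux.lift_blocks_injective ω hne hpre).comp Stmt5Aux.A_inj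
  have hθφ : ∀ n, θ n = φ (FreeGroup.of n) := by
    intro n
    rw [hθ, hφ, MonoidHom.comp_apply,
      show Stmt5Aux.Ahom (FreeGroup.of n) = Stmt5Aux.tProd n from FreeGroup.lift_apply_of,
      Stmt5Aux.tProd, map_list_prod, List.map_map]
    rw [Stmt5Aux.wordToF2_flatMap ω]
    congr 1
    simp [Function.comp_def, FreeGroup.lift_apply_of]
  have himg : ∀ S : Set ℕ,
      Subgroup.closure (θ '' S) = Subgroup.map φ (Subgroup.closure (FreeGroup.of '' S)) := by
    intro S
    rw [MonoidHom.map_closure, Set.image_image]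
    congr 1
    exact Set.image_congr (fun n _ => hθφ n)
  rw [himg, himg, ← Subgroup.map_inf _ _ φ hφinj, Stmt5Aux.free_closure_disjoint,
    Subgroup.map_bot]
end

section
/- In the free group F₂ on generators a,b, define for each n ∈ ℕ the element gₙ = b^(n+1)·a·a·b^(n+1) (i.e., the element corresponding to the word ωₙτₙ where ωₙ = b^(n+1)a and τₙ = a b^(n+1) is its reverse). Then the family (gₙ)ₙ∈ℕ freely generates: the group homomorphism FreeGroup ℕ → F₂ sending the n-th free generator to gₙ is injective. -/
set_option linter.unusedSectionVars false


open FreeGroup List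

variable {α : Type*} [DecidableEq α]

/-- Prepending a letter to a reduced word with non-cancelling head stays reduced. -/
lemma lemA (x : α × Bool) {v : List (α × Bool)} (hv : reduce v = v)
    (h : v.head? ≠ some (x.1, !x.2)) : reduce (x :: v) = x :: v := by
  rw [FreeGroup.reduce.cons, hv]
  cases v with
  | nil => rfl
  | cons hd tl =>
    simp only [List.head?_cons, ne_eq, Option.some.injEq] at h
    have hc : ¬ (x.1 = hd.1 ∧ x.2 = !hd.2) := by
      rintro ⟨h1, h2⟩
      exact h (Prod.ext h1.symm (by cases hx : x.2 <;> cases hh : hd.2 <;> simp_all))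
    simp [hc]

/-- Prepending `replicate m p` to a reduced word whose head does not cancel `p`. -/
lemma lemB (p : α × Bool) {v : List (α × Bool)} (hv : reduce v = v)
    (h : v.head? ≠ some (p.1, !p.2)) (m : ℕ) :
    reduce (List.replicate m p ++ v) = List.replicate m p ++ v := by
  induction m with
  | zero => simpa using hv
  | succ m ih =>
    rw [List.replicate_succ, List.cons_append]
    refine lemA p ih ?_
    cases m with
    | zero => simpa using h
    | succ k =>
      rw [List.replicate_succ, List.cons_append, List.head?_cons]
      simp [Prod.ext_iff]

/-- Structure of the reduction of `p^m ++ w` for reduced `w`. -/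
lemma lemC (p : α × Bool) (m : ℕ) {w : List (α × Bool)} (hw : reduce w = w) :
    (∃ t, reduce (List.replicate m p ++ w) = p :: t) ∨
      (List.replicate m (p.1, !p.2) <+: w ∧
        reduce (List.replicate m p ++ w) = w.drop m) := by
  induction m with
  | zero => exact Or.inr ⟨List.nil_prefix, by simpa using hw⟩
  | succ m ih =>
    rw [List.replicate_succ, List.cons_append, FreeGroup.reduce.cons]
    rcases ih with ⟨t, ht⟩ | ⟨hpre, hdrop⟩
    · rw [ht]
      exact Or.inl ⟨p :: t, by simp⟩
    · rw [hdrop]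
      rcases hdc : w.drop m with _ | ⟨hd, tl⟩
      · exact Or.inl ⟨[], rfl⟩
      · by_cases hcan : p.1 = hd.1 ∧ p.2 = !hd.2
        · right
          obtain ⟨s, hs⟩ := hpre
          have hlen : s = w.drop m := by
            rw [← hs, List.drop_left']; simp
          have hhd : hd = (p.1, !p.2) := by
            obtain ⟨h1, h2⟩ := hcan
            exact Prod.ext h1.symm (by cases hx : p.2 <;> cases hh : hd.2 <;> simp_all)
          have hw' : w = List.replicate (m+1) (p.1, !p.2) ++ tl := by
            rw [List.replicate_succ']
            rw [← hs, hlen, hdc, hhd]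
            simp
          refine ⟨⟨tl, hw'.symm⟩, ?_⟩
          have h2 : w.drop (m+1) = tl := by rw [hw', List.drop_left']; simp
          rw [h2]
          simp [hcan]
        · exact Or.inl ⟨hd :: tl, by simp [hcan]⟩

lemma lemMain (p q : α × Bool) (hpq : q.1 ≠ p.1) (m : ℕ) {w : List (α × Bool)}
    (hw : reduce w = w)
    (hpre : ¬ (List.replicate (m+1) (p.1, !p.2) ++ [(q.1, !q.2)] <+: w)) :
    reduce (List.replicate (m+1) p ++ q :: q :: (List.replicate (m+1) p ++ w))
      = (List.replicate (m+1) p ++ [q]) ++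
          (q :: reduce (List.replicate (m+1) p ++ w)) := by
  set u := reduce (List.replicate (m+1) p ++ w) with hu
  have hu_red : reduce u = u := FreeGroup.reduce.idem
  have hhead : u.head? ≠ some (q.1, !q.2) := by
    rcases lemC p (m+1) hw with ⟨t, ht⟩ | ⟨hp, hd⟩
    · rw [← hu] at ht
      rw [ht, List.head?_cons]
      intro hcon
      exact hpq (congrArg Prod.fst (Option.some.inj hcon)).symm
    · rw [← hu] at hd
      rw [hd]
      intro hcon
      obtain ⟨s, hs⟩ := hp
      have hsd : s = w.drop (m+1) := by rw [← hs, List.drop_left']; simp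
      rcases hdc : w.drop (m+1) with _ | ⟨hd2, tl2⟩
      · rw [hdc] at hcon; simp at hcon
      · rw [hdc, List.head?_cons] at hcon
        apply hpre
        refine ⟨tl2, ?_⟩
        rw [← hs, hsd, hdc, Option.some.inj hcon]
        simp
  have h1 : reduce (q :: u) = q :: u := lemA q hu_red hhead
  have h2 : reduce (q :: q :: u) = q :: q :: u := by
    refine lemA q h1 ?_
    simp [Prod.ext_iff]
  have h3 : reduce (List.replicate (m+1) p ++ (q :: q :: u)) =
      List.replicate (m+1) p ++ (q :: q :: u) := by
    refine lemB p h2 ?_ (m+1)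
    simp [Prod.ext_iff, fun h => hpq h]
  have hred : FreeGroup.Red
      ((List.replicate (m+1) p ++ [q, q]) ++ (List.replicate (m+1) p ++ w))
      ((List.replicate (m+1) p ++ [q, q]) ++ u) :=
    FreeGroup.Red.append_append Relation.ReflTransGen.refl FreeGroup.reduce.red
  have heq := FreeGroup.reduce.eq_of_red hred
  have hl1 : (List.replicate (m+1) p ++ [q, q]) ++ (List.replicate (m+1) p ++ w)
      = List.replicate (m+1) p ++ q :: q :: (List.replicate (m+1) p ++ w) := by simp
  have hl2 : (List.replicate (m+1) p ++ [q, q]) ++ u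
      = List.replicate (m+1) p ++ (q :: q :: u) := by simp
  rw [hl1, hl2] at heq
  rw [heq, h3]
  simp

lemma helperD {i j : ℕ} (hij : i < j) {p q r : α × Bool} (hq : q ≠ p)
    {w : List (α × Bool)}
    (h1 : List.replicate (i+1) p ++ [q] <+: w)
    (h2 : List.replicate (j+1) p ++ [r] <+: w) : False := by
  have hk1 : i + 1 < (List.replicate (i+1) p ++ [q]).length := by simp
  have hk2 : i + 1 < (List.replicate (j+1) p ++ [r]).length := by simp; omega
  have e1 := h1.getElem hk1
  have e2 := h2.getElem hk2
  have e3 : (List.replicate (i+1) p ++ [q])[i+1] = q := by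
    rw [List.getElem_append_right (by simp)]
    simp
  have e4 : (List.replicate (j+1) p ++ [r])[i+1] = p := by
    rw [List.getElem_append_left (by simp; omega)]
    simp
  apply hq
  rw [← e3, e1, ← e2, e4]

lemma helperD0 {p p' q r : α × Bool} (hp : p ≠ p') {i j : ℕ} {w : List (α × Bool)}
    (h1 : List.replicate (i+1) p ++ [q] <+: w)
    (h2 : List.replicate (j+1) p' ++ [r] <+: w) : False := by
  have hk1 : 0 < (List.replicate (i+1) p ++ [q]).length := by simp
  have hk2 : 0 < (List.replicate (j+1) p' ++ [r]).length := by simp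
  have e1 := h1.getElem hk1
  have e2 := h2.getElem hk2
  have e3 : (List.replicate (i+1) p ++ [q])[0] = p := by
    rw [List.getElem_append_left (by simp)]; simp
  have e4 : (List.replicate (j+1) p' ++ [r])[0] = p' := by
    rw [List.getElem_append_left (by simp)]; simp
  apply hp
  rw [← e3, e1, ← e2, e4]

lemma memkey (s : Bool) (n : ℕ) (y : FreeGroup (Fin 2))
    (h : ¬ (List.replicate (n+1) ((1 : Fin 2), !s) ++ [((0 : Fin 2), !s)] <+: y.toWord)) :
    List.replicate (n+1) ((1 : Fin 2), s) ++ [((0 : Fin 2), s)] <+: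
      (FreeGroup.mk (List.replicate (n+1) ((1 : Fin 2), s) ++ ((0 : Fin 2), s) ::
        ((0 : Fin 2), s) :: List.replicate (n+1) ((1 : Fin 2), s)) * y).toWord := by
  have h1 : FreeGroup.mk (List.replicate (n+1) ((1 : Fin 2), s) ++ ((0 : Fin 2), s) ::
        ((0 : Fin 2), s) :: List.replicate (n+1) ((1 : Fin 2), s)) * y
      = FreeGroup.mk ((List.replicate (n+1) ((1 : Fin 2), s) ++ ((0 : Fin 2), s) ::
        ((0 : Fin 2), s) :: List.replicate (n+1) ((1 : Fin 2), s)) ++ y.toWord) := by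
    conv_lhs => rw [← FreeGroup.mk_toWord (x := y)]
    rw [FreeGroup.mul_mk]
  rw [h1, FreeGroup.toWord_mk]
  have h2 : (List.replicate (n+1) ((1 : Fin 2), s) ++ ((0 : Fin 2), s) ::
        ((0 : Fin 2), s) :: List.replicate (n+1) ((1 : Fin 2), s)) ++ y.toWord
      = List.replicate (n+1) ((1 : Fin 2), s) ++ ((0 : Fin 2), s) :: ((0 : Fin 2), s) ::
          (List.replicate (n+1) ((1 : Fin 2), s) ++ y.toWord) := by simp
  rw [h2, lemMain ((1 : Fin 2), s) ((0 : Fin 2), s) (by exact (by decide : (0 : Fin 2) ≠ 1)) n (FreeGroup.reduce_toWord y) h]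
  exact ⟨_, rfl⟩

lemma pow_of_mk (x : Fin 2 × Bool) (k : ℕ) :
    FreeGroup.mk [x] ^ k = FreeGroup.mk (List.replicate k x) := by
  induction k with
  | zero => simp [FreeGroup.one_eq_mk]
  | succ k ih => rw [pow_succ, ih, FreeGroup.mul_mk, ← List.replicate_succ']

lemma of_eq_mk (x : Fin 2) : FreeGroup.of x = FreeGroup.mk [(x, true)] := rfl

lemma g_eq_mk (n : ℕ) :
    (FreeGroup.of (1 : Fin 2)) ^ (n + 1) * FreeGroup.of (0 : Fin 2) *
        FreeGroup.of (0 : Fin 2) * (FreeGroup.of (1 : Fin 2)) ^ (n + 1)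
      = FreeGroup.mk (List.replicate (n+1) ((1 : Fin 2), true) ++ ((0 : Fin 2), true) ::
          ((0 : Fin 2), true) :: List.replicate (n+1) ((1 : Fin 2), true)) := by
  rw [of_eq_mk, of_eq_mk, pow_of_mk, FreeGroup.mul_mk, FreeGroup.mul_mk, FreeGroup.mul_mk]
  congr 1
  simp

lemma g_inv_eq_mk (n : ℕ) :
    ((FreeGroup.of (1 : Fin 2)) ^ (n + 1) * FreeGroup.of (0 : Fin 2) *
        FreeGroup.of (0 : Fin 2) * (FreeGroup.of (1 : Fin 2)) ^ (n + 1))⁻¹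
      = FreeGroup.mk (List.replicate (n+1) ((1 : Fin 2), false) ++ ((0 : Fin 2), false) ::
          ((0 : Fin 2), false) :: List.replicate (n+1) ((1 : Fin 2), false)) := by
  rw [g_eq_mk, FreeGroup.inv_mk]
  congr 1
  simp [FreeGroup.invRev, List.reverse_append]


/-- In `F₂ = FreeGroup (Fin 2)` with generators `a = of 0` and `b = of 1`, the
elements `gₙ = b^(n+1) * a * a * b^(n+1)` freely generate: the induced
homomorphism `FreeGroup ℕ → F₂` is injective. -/
theorem stmt_7 :
    Function.Injective
      (FreeGroup.lift
        (fun n => (FreeGroup.of (1 : Fin 2)) ^ (n + 1) * FreeGroup.of (0 : Fin 2) *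
          FreeGroup.of (0 : Fin 2) * (FreeGroup.of (1 : Fin 2)) ^ (n + 1)) :
        FreeGroup ℕ →* FreeGroup (Fin 2)) := by
  apply FreeGroup.injective_lift_of_ping_pong _
    (fun n : ℕ => {x : FreeGroup (Fin 2) |
      List.replicate (n+1) ((1 : Fin 2), true) ++ [((0 : Fin 2), true)] <+: x.toWord})
    (fun n : ℕ => {x : FreeGroup (Fin 2) |
      List.replicate (n+1) ((1 : Fin 2), false) ++ [((0 : Fin 2), false)] <+: x.toWord})
  · -- nonempty
    intro i
    refine ⟨FreeGroup.mk (List.replicate (i+1) ((1 : Fin 2), true) ++ [((0 : Fin 2), true)]), ?_⟩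
    show _ <+: _
    rw [FreeGroup.toWord_mk, lemB _ (FreeGroup.reduce_singleton _) (by simp) (i+1)]
  · -- X pairwise disjoint
    intro i j hij
    rw [Function.onFun, Set.disjoint_left]
    intro x h1 h2
    rcases lt_or_gt_of_ne hij with h | h
    · exact helperD h (by decide) h1 h2
    · exact helperD h (by decide) h2 h1
  · -- Y pairwise disjoint
    intro i j hij
    rw [Function.onFun, Set.disjoint_left]
    intro x h1 h2
    rcases lt_or_gt_of_ne hij with h | h
    · exact helperD h (by decide) h1 h2
    · exact helperD h (by decide) h2 h1
  · -- X vs Y disjoint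
    intro i j
    rw [Set.disjoint_left]
    intro x h1 h2
    exact helperD0 (by decide) h1 h2
  · -- ping
    rintro i x ⟨y, hy, rfl⟩
    simp only [Set.mem_compl_iff, Set.mem_setOf_eq] at hy
    show (FreeGroup.of 1 ^ (i + 1) * FreeGroup.of 0 * FreeGroup.of 0 *
      FreeGroup.of 1 ^ (i + 1)) • y ∈ _
    rw [smul_eq_mul, g_eq_mk]
    exact memkey true i y hy
  · -- pong
    rintro i x ⟨y, hy, rfl⟩
    simp only [Set.mem_compl_iff, Set.mem_setOf_eq] at hy
    show ((fun n => FreeGroup.of 1 ^ (n + 1) * FreeGroup.of 0 * FreeGroup.of 0 *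
      FreeGroup.of 1 ^ (n + 1))⁻¹ i) • y ∈ _
    rw [Pi.inv_apply, smul_eq_mul, g_inv_eq_mk]
    exact memkey false i y hy
end

section
/- In the free group F₂ on generators a,b, for each n ∈ ℕ let θₙ = g₀·g₁·⋯·gₙ where gₖ = b^(k+1)·a·a·b^(k+1). Let G₁ be the subgroup of F₂ generated by {θₙ : n odd} and G₂ the subgroup generated by {θₙ : n even}. Then G₁ and G₂ each contain two non-commuting elements (so each is a non-abelian free group), and G₁ ∩ G₂ is the trivial subgroup. -/
open FreeGroup List

namespace Stmt8Aux

abbrev C : (Fin 2 × Bool) → (Fin 2 × Bool) → Prop :=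
  fun x y => ¬(x.1 = y.1 ∧ x.2 = !y.2)

lemma hCxx : ∀ x : Fin 2 × Bool, C x x := by decide
lemma hC10 : ∀ u v : Bool, C ((1:Fin 2), u) ((0:Fin 2), v) := by decide
lemma hC01 : ∀ u v : Bool, C ((0:Fin 2), u) ((1:Fin 2), v) := by decide
lemma hC1 : ∀ (u : Bool) (y : Fin 2 × Bool), y ≠ ((1:Fin 2), !u) → C ((1:Fin 2), u) y := by decide
lemma hC0 : ∀ (u : Bool) (y : Fin 2 × Bool), y ≠ ((0:Fin 2), !u) → C ((0:Fin 2), u) y := by decide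

lemma chain'_reduce {α : Type*} [DecidableEq α] (L : List (α × Bool)) :
    List.Chain' (fun x y : α × Bool => ¬(x.1 = y.1 ∧ x.2 = !y.2)) (FreeGroup.reduce L) := by
  induction L with
  | nil => simp [List.Chain']
  | cons x L ih =>
    rw [FreeGroup.reduce.cons]
    cases h : FreeGroup.reduce L with
    | nil => simp [List.Chain']
    | cons y t =>
      rw [h] at ih
      by_cases hc : x.1 = y.1 ∧ x.2 = !y.2
      · simpa [hc, List.Chain'] using ih.tail
      · simp only [hc, if_false]
        exact List.isChain_cons_cons.mpr ⟨hc, ih⟩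

lemma reduce_eq_self {α : Type*} [DecidableEq α] {L : List (α × Bool)}
    (h : List.Chain' (fun x y : α × Bool => ¬(x.1 = y.1 ∧ x.2 = !y.2)) L) :
    FreeGroup.reduce L = L := by
  induction L with
  | nil => rfl
  | cons x L ih =>
    rw [FreeGroup.reduce.cons, ih h.tail]
    cases L with
    | nil => rfl
    | cons y t =>
      have h1 := (List.isChain_cons_cons.mp h).1
      simp [h1]

lemma toWord_mk_eq {L : List (Fin 2 × Bool)} (h : List.Chain' C L) :
    (FreeGroup.mk L).toWord = L := by
  rw [FreeGroup.toWord_mk, reduce_eq_self h]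

lemma chain'_toWord (w : FreeGroup (Fin 2)) : List.Chain' C w.toWord := by
  rw [← FreeGroup.reduce_toWord]
  exact chain'_reduce _

def P (k : ℕ) (s : Bool) : List (Fin 2 × Bool) :=
  List.replicate (k+1) ((1 : Fin 2), s) ++ [((0 : Fin 2), s)]

def W (k : ℕ) (s : Bool) : List (Fin 2 × Bool) :=
  List.replicate (k+1) ((1 : Fin 2), s) ++ ((0 : Fin 2), s) :: ((0 : Fin 2), s) ::
    List.replicate (k+1) ((1 : Fin 2), s)

def XS (k : ℕ) (s : Bool) : Set (FreeGroup (Fin 2)) := {w | P k s <+: w.toWord}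

lemma mk_replicate (x : Fin 2 × Bool) :
    ∀ n, FreeGroup.mk (List.replicate n x) = (FreeGroup.mk [x]) ^ n
  | 0 => by simp [FreeGroup.one_eq_mk]
  | n+1 => by
      rw [List.replicate_succ, ← List.singleton_append, ← FreeGroup.mul_mk,
        mk_replicate x n, pow_succ']

lemma mk_flip (x : Fin 2) (s : Bool) :
    FreeGroup.mk [(x, !s)] = (FreeGroup.mk [(x, s)])⁻¹ := by
  rw [FreeGroup.inv_mk]
  simp [FreeGroup.invRev]

-- the common shape
lemma mk_shape (s t : Bool) (k m : ℕ) (D : List (Fin 2 × Bool)) :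
    FreeGroup.mk (List.replicate (k+1) ((1:Fin 2), s) ++ ((0:Fin 2), s) :: ((0:Fin 2), s) ::
      (List.replicate m ((1:Fin 2), t) ++ D))
    = (FreeGroup.mk [((1:Fin 2), s)])^(k+1) * (FreeGroup.mk [((0:Fin 2), s)] *
      (FreeGroup.mk [((0:Fin 2), s)] * ((FreeGroup.mk [((1:Fin 2), t)])^m * FreeGroup.mk D))) := by
  rw [show ((0:Fin 2), s) :: ((0:Fin 2), s) :: (List.replicate m ((1:Fin 2), t) ++ D)
      = [((0:Fin 2), s)] ++ ([((0:Fin 2), s)] ++ (List.replicate m ((1:Fin 2), t) ++ D)) from rfl]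
  rw [← FreeGroup.mul_mk, ← FreeGroup.mul_mk, ← FreeGroup.mul_mk, ← FreeGroup.mul_mk,
    mk_replicate, mk_replicate]

lemma mk_W (k : ℕ) (s : Bool) :
    FreeGroup.mk (W k s)
    = (FreeGroup.mk [((1:Fin 2), s)])^(k+1) * (FreeGroup.mk [((0:Fin 2), s)] *
      (FreeGroup.mk [((0:Fin 2), s)] * (FreeGroup.mk [((1:Fin 2), s)])^(k+1))) := by
  have h := mk_shape s s k (k+1) []
  rw [List.append_nil] at h
  rw [W, h, ← FreeGroup.one_eq_mk, mul_one]

lemma inv_W (k : ℕ) : (FreeGroup.mk (W k true))⁻¹ = FreeGroup.mk (W k false) := by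
  have hb : FreeGroup.mk [((1:Fin 2), false)] = (FreeGroup.mk [((1:Fin 2), true)])⁻¹ :=
    mk_flip 1 true
  have ha : FreeGroup.mk [((0:Fin 2), false)] = (FreeGroup.mk [((0:Fin 2), true)])⁻¹ :=
    mk_flip 0 true
  rw [mk_W, mk_W, hb, ha]
  group

lemma chain'_repl_append (x : Fin 2 × Bool) (m : ℕ) (D : List (Fin 2 × Bool))
    (hD : List.Chain' C D) (hjunc : ∀ y ∈ D.head?, C x y) :
    List.Chain' C (List.replicate m x ++ D) := by
  show List.IsChain C _
  rw [List.isChain_append]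
  refine ⟨List.isChain_replicate_of_rel _ (hCxx x), hD, ?_⟩
  intro a ha y hy
  have ha' : a = x := List.eq_of_mem_replicate (List.mem_of_mem_getLast? ha)
  subst ha'
  exact hjunc y hy

lemma chain'_shape (s t : Bool) (k m : ℕ) (D : List (Fin 2 × Bool)) (hD : List.Chain' C D)
    (h1 : ∀ y ∈ D.head?, y ≠ ((1:Fin 2), !t))
    (h0 : m = 0 → ∀ y ∈ D.head?, y ≠ ((0:Fin 2), !s)) :
    List.Chain' C (List.replicate (k+1) ((1:Fin 2), s) ++ ((0:Fin 2), s) :: ((0:Fin 2), s) ::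
      (List.replicate m ((1:Fin 2), t) ++ D)) := by
  apply chain'_repl_append
  · show List.IsChain C _
    rw [List.isChain_cons_cons]
    refine ⟨hCxx _, ?_⟩
    rw [List.isChain_cons]
    refine ⟨?_, chain'_repl_append _ _ _ hD (fun y hy => hC1 t y (h1 y hy))⟩
    intro y hy
    cases m with
    | zero =>
      simp only [List.replicate_zero, List.nil_append] at hy
      exact hC0 s y (h0 rfl y hy)
    | succ m' =>
      simp only [List.replicate_succ, List.cons_append, List.head?_cons,
        Option.mem_some_iff] at hy
      subst hy
      exact hC01 s t
  · intro y hy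
    simp only [List.head?_cons, Option.mem_some_iff] at hy
    subst hy
    exact hC10 s s

end Stmt8Aux

namespace Stmt8Aux

lemma hC1' : ∀ (u : Bool) (y : Fin 2 × Bool), C ((1:Fin 2), u) y → y ≠ ((1:Fin 2), !u) := by
  decide

lemma P_prefix (k : ℕ) (s : Bool) (l : List (Fin 2 × Bool)) :
    P k s <+: (List.replicate (k+1) ((1:Fin 2), s) ++ ((0:Fin 2), s) :: l) :=
  ⟨l, by simp [P]⟩

lemma main (s : Bool) (k : ℕ) (w : FreeGroup (Fin 2)) (hw : ¬ P k (!s) <+: w.toWord) :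
    P k s <+: (FreeGroup.mk (W k s) * w).toWord := by
  classical
  set B := FreeGroup.mk [((1:Fin 2), s)] with hB
  set A := FreeGroup.mk [((0:Fin 2), s)] with hA
  set p : Fin 2 × Bool → Bool := fun x => x = ((1 : Fin 2), !s) with hp
  set D := w.toWord.dropWhile p with hD
  set j := (w.toWord.takeWhile p).length with hj
  have hsplit : w.toWord = List.replicate j ((1:Fin 2), !s) ++ D := by
    conv_lhs => rw [← List.takeWhile_append_dropWhile (p := p) (l := w.toWord)]
    congr 1
    apply List.eq_replicate_of_mem
    intro x hx
    have := List.mem_takeWhile_imp hx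
    simpa [hp] using this
  have hhead : ∀ y ∈ D.head?, y ≠ ((1:Fin 2), !s) := by
    intro y hy
    have h := List.head?_dropWhile_not p w.toWord
    rw [← hD, Option.mem_def.mp hy] at h
    simpa [hp] using h
  have hLc : List.Chain' C w.toWord := chain'_toWord w
  rw [hsplit] at hLc
  have hDc : List.Chain' C D := (List.isChain_append.mp hLc).2.1
  have hjunc := (List.isChain_append.mp hLc).2.2
  have hflip : FreeGroup.mk [((1:Fin 2), !s)] = B⁻¹ := mk_flip 1 s
  have hwmk : w = B⁻¹ ^ j * FreeGroup.mk D := by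
    conv_lhs => rw [← FreeGroup.mk_toWord (x := w), hsplit]
    rw [← FreeGroup.mul_mk, mk_replicate, hflip]
  have key : FreeGroup.mk (W k s) * w
      = B^(k+1) * (A * (A * (B^(k+1) * (B⁻¹^j * FreeGroup.mk D)))) := by
    rw [mk_W, hwmk]
    simp only [mul_assoc, hB, hA]
  clear_value B A p D j
  rcases lt_trichotomy j (k+1) with h | h | h
  · -- j < k+1
    have heq : FreeGroup.mk (W k s) * w
        = FreeGroup.mk (List.replicate (k+1) ((1:Fin 2), s) ++ ((0:Fin 2), s) :: ((0:Fin 2), s) ::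
          (List.replicate (k+1-j) ((1:Fin 2), s) ++ D)) := by
      have hsum : B ^ (k+1-j) * B ^ j = B ^ (k+1) := by
        rw [← pow_add]; congr 1; omega
      have e1 : B^(k+1) * (B⁻¹^j * FreeGroup.mk D) = B^(k+1-j) * FreeGroup.mk D := by
        rw [← mul_assoc, inv_pow, ← hsum, mul_inv_cancel_right]
      rw [key, mk_shape, ← hB, ← hA, e1]
    rw [heq, toWord_mk_eq (chain'_shape s s k (k+1-j) D hDc hhead (fun hm => absurd hm (by omega)))]
    exact P_prefix k s _
  · -- j = k+1
    have h0 : ∀ y ∈ D.head?, y ≠ ((0:Fin 2), !s) := by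
      intro y hy hcontr
      subst hcontr
      apply hw
      rw [hsplit, h]
      rw [Option.mem_def] at hy
      obtain ⟨t, rfl⟩ : ∃ t, D = ((0:Fin 2), !s) :: t := by
        cases D with
        | nil => simp at hy
        | cons d t =>
            simp only [List.head?_cons, Option.some.injEq] at hy
            exact ⟨t, by rw [hy]⟩
      exact P_prefix k (!s) t
    have heq : FreeGroup.mk (W k s) * w
        = FreeGroup.mk (List.replicate (k+1) ((1:Fin 2), s) ++ ((0:Fin 2), s) :: ((0:Fin 2), s) ::
          (List.replicate 0 ((1:Fin 2), s) ++ D)) := by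
      have e1 : B^(k+1) * (B⁻¹^j * FreeGroup.mk D) = B^0 * FreeGroup.mk D := by
        rw [h, inv_pow, mul_inv_cancel_left, pow_zero, one_mul]
      rw [key, mk_shape, ← hB, ← hA, e1]
    rw [heq, toWord_mk_eq (chain'_shape s s k 0 D hDc hhead (fun _ => h0))]
    exact P_prefix k s _
  · -- j > k+1
    have h1 : ∀ y ∈ D.head?, y ≠ ((1:Fin 2), !(!s)) := by
      intro y hy
      have hlast : (List.replicate j ((1:Fin 2), !s)).getLast? = some ((1:Fin 2), !s) := by
        cases j with
        | zero => omega
        | succ n => rw [List.replicate_succ']; exact List.getLast?_concat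
      exact hC1' (!s) y (hjunc _ (by rw [hlast]; rfl) y hy)
    have heq : FreeGroup.mk (W k s) * w
        = FreeGroup.mk (List.replicate (k+1) ((1:Fin 2), s) ++ ((0:Fin 2), s) :: ((0:Fin 2), s) ::
          (List.replicate (j-(k+1)) ((1:Fin 2), !s) ++ D)) := by
      have hsum : B⁻¹ ^ (k+1) * B⁻¹ ^ (j-(k+1)) = B⁻¹ ^ j := by
        rw [← pow_add]; congr 1; omega
      have e1 : B^(k+1) * (B⁻¹^j * FreeGroup.mk D) = B⁻¹^(j-(k+1)) * FreeGroup.mk D := by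
        rw [← hsum, mul_assoc (B⁻¹^(k+1)), inv_pow, mul_inv_cancel_left]
      rw [key, mk_shape, ← hB, ← hA, hflip, e1]
    rw [heq, toWord_mk_eq (chain'_shape s (!s) k (j-(k+1)) D hDc h1 (fun hm => absurd hm (by omega)))]
    exact P_prefix k s _

end Stmt8Aux

namespace Stmt8Aux
open Pointwise

lemma chain'_P (k : ℕ) (s : Bool) : List.Chain' C (P k s) := by
  rw [P]
  apply chain'_repl_append
  · exact List.isChain_singleton _
  · intro y hy
    simp only [List.head?_cons, Option.mem_some_iff] at hy
    subst hy
    exact hC10 s s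

lemma prefix_lt_false {i j : ℕ} {s t : Bool} {L : List (Fin 2 × Bool)}
    (hij : i < j) (h1 : P i s <+: L) (h2 : P j t <+: L) : False := by
  have hlen : i + 2 ≤ L.length := by
    have := h1.length_le; simp [P] at this; omega
  have e1 : (P i s)[i+1]'(by simp [P]) = L[i+1]'(by omega) := h1.getElem _
  have e2 : (P j t)[i+1]'(by simp [P]; omega) = L[i+1]'(by omega) := h2.getElem _
  have v1 : (P i s)[i+1]'(by simp [P]) = ((0:Fin 2), s) := by
    simp [P, List.getElem_append]
  have v2 : (P j t)[i+1]'(by simp [P]; omega) = ((1:Fin 2), t) := by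
    have hn : i + 1 < j + 1 := by omega
    simp [P, List.getElem_append, hn]
  rw [v1] at e1
  rw [v2, ← e1] at e2
  rw [Prod.mk.injEq] at e2
  exact absurd e2.1 (by decide)

lemma prefix_inj {i j : ℕ} {s t : Bool} {L : List (Fin 2 × Bool)}
    (h1 : P i s <+: L) (h2 : P j t <+: L) : i = j ∧ s = t := by
  constructor
  · rcases Nat.lt_trichotomy i j with h | h | h
    · exact (prefix_lt_false h h1 h2).elim
    · exact h
    · exact (prefix_lt_false h h2 h1).elim
  · have hlen : 0 < L.length := by
      have := h1.length_le; simp [P] at this; omega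
    have e1 : (P i s)[0]'(by simp [P]) = L[0]'hlen := h1.getElem _
    have e2 : (P j t)[0]'(by simp [P]) = L[0]'hlen := h2.getElem _
    have v1 : (P i s)[0]'(by simp [P]) = ((1:Fin 2), s) := by
      simp [P, List.getElem_append]
    have v2 : (P j t)[0]'(by simp [P]) = ((1:Fin 2), t) := by
      simp [P, List.getElem_append]
    rw [v1] at e1
    rw [v2, ← e1] at e2
    rw [Prod.mk.injEq] at e2
    exact e2.2.symm

lemma lift_inj (g : ℕ → FreeGroup (Fin 2)) (hg : ∀ k, g k = FreeGroup.mk (W k true)) :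
    Function.Injective (FreeGroup.lift g) := by
  apply FreeGroup.injective_lift_of_ping_pong g (fun k => XS k true) (fun k => XS k false)
  · intro k
    exact ⟨FreeGroup.mk (P k true), by
      show P k true <+: _
      rw [toWord_mk_eq (chain'_P k true)]⟩
  · intro i j hij
    refine Set.disjoint_left.mpr fun a hai haj => hij ?_
    exact (prefix_inj hai haj).1
  · intro i j hij
    refine Set.disjoint_left.mpr fun a hai haj => hij ?_
    exact (prefix_inj hai haj).1
  · intro i j
    refine Set.disjoint_left.mpr fun a hai haj => ?_
    exact absurd (prefix_inj hai haj).2 (by decide)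
  · intro i x hx
    rw [Set.mem_smul_set] at hx
    obtain ⟨w, hw, rfl⟩ := hx
    show P i true <+: (g i • w).toWord
    rw [smul_eq_mul, hg i]
    exact main true i w hw
  · intro i x hx
    rw [Set.mem_smul_set] at hx
    obtain ⟨w, hw, rfl⟩ := hx
    show P i false <+: ((g⁻¹) i • w).toWord
    have : (g⁻¹) i = FreeGroup.mk (W i false) := by
      rw [Pi.inv_apply, hg i, inv_W]
    rw [smul_eq_mul, this]
    exact main false i w hw

end Stmt8Aux

namespace Stmt8Aux

/-- word over ℕ distinct letters don't commute -/
lemma of_mul_of_ne {m n : ℕ} (h : m ≠ n) :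
    FreeGroup.of m * FreeGroup.of n ≠ FreeGroup.of n * FreeGroup.of m := by
  intro hc
  have h1 : FreeGroup.of m * FreeGroup.of n = FreeGroup.mk [(m, true), (n, true)] :=
    FreeGroup.mul_mk
  have h2 : FreeGroup.of n * FreeGroup.of m = FreeGroup.mk [(n, true), (m, true)] :=
    FreeGroup.mul_mk
  rw [h1, h2] at hc
  have := congrArg FreeGroup.toWord hc
  rw [FreeGroup.toWord_mk, FreeGroup.toWord_mk, reduce_eq_self (by simp [List.Chain']),
    reduce_eq_self (by simp [List.Chain'])] at this
  simp at this
  exact h this.1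

def efun (n : ℕ) : FreeGroup ℕ := ((List.range (n+1)).map FreeGroup.of).prod

def dfun : ℕ → FreeGroup ℕ
  | 0 => FreeGroup.of 0
  | m+1 => (FreeGroup.of m)⁻¹ * FreeGroup.of (m+1)

lemma d_e (n : ℕ) : (FreeGroup.lift dfun) (efun n) = FreeGroup.of n := by
  induction n with
  | zero =>
    have : List.range 1 = [0] := rfl
    simp [efun, this, FreeGroup.lift_apply_of, dfun]
  | succ n ih =>
    have hsp : efun (n+1) = efun n * FreeGroup.of (n+1) := by
      rw [efun, efun, List.range_succ, List.map_append, List.prod_append]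
      simp
    rw [hsp, _root_.map_mul, ih, FreeGroup.lift_apply_of]
    show FreeGroup.of n * dfun (n+1) = FreeGroup.of (n+1)
    rw [dfun, mul_inv_cancel_left]

lemma d_e_hom : (FreeGroup.lift dfun).comp (FreeGroup.lift efun) = MonoidHom.id _ := by
  ext n
  simp only [MonoidHom.comp_apply, FreeGroup.lift_apply_of, MonoidHom.id_apply]
  exact d_e n

lemma e_inj : Function.Injective (FreeGroup.lift efun) := by
  intro u v h
  have h2 := congrArg (FreeGroup.lift dfun) h
  rwa [← MonoidHom.comp_apply, ← MonoidHom.comp_apply, d_e_hom, MonoidHom.id_apply,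
    MonoidHom.id_apply] at h2

end Stmt8Aux



/-- In `F₂ = FreeGroup (Fin 2)` with generators `a = of 0` and `b = of 1`, set
`gₖ = b^(k+1) * a * a * b^(k+1)` and `θₙ = g₀ * g₁ * ⋯ * gₙ`. Then the
subgroup `G₁` generated by the odd-indexed `θₙ` and the subgroup `G₂`
generated by the even-indexed `θₙ` each contain two non-commuting elements,
and `G₁ ⊓ G₂` is trivial. -/
theorem stmt_8 (g θ : ℕ → FreeGroup (Fin 2))
    (hg : ∀ k, g k = (FreeGroup.of (1 : Fin 2)) ^ (k + 1) * FreeGroup.of (0 : Fin 2) *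
      FreeGroup.of (0 : Fin 2) * (FreeGroup.of (1 : Fin 2)) ^ (k + 1))
    (hθ : ∀ n, θ n = ((List.range (n + 1)).map g).prod) :
    (∃ x ∈ Subgroup.closure (θ '' {n | Odd n}),
      ∃ y ∈ Subgroup.closure (θ '' {n | Odd n}), x * y ≠ y * x) ∧
    (∃ x ∈ Subgroup.closure (θ '' {n | Even n}),
      ∃ y ∈ Subgroup.closure (θ '' {n | Even n}), x * y ≠ y * x) ∧
    Subgroup.closure (θ '' {n | Odd n}) ⊓ Subgroup.closure (θ '' {n | Even n}) = ⊥ := by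
  classical
  -- g in word form
  have hgW : ∀ k, g k = FreeGroup.mk (Stmt8Aux.W k true) := by
    intro k
    rw [hg k, Stmt8Aux.mk_W]
    rw [show FreeGroup.of (1 : Fin 2) = FreeGroup.mk [((1:Fin 2), true)] from rfl,
      show FreeGroup.of (0 : Fin 2) = FreeGroup.mk [((0:Fin 2), true)] from rfl]
    simp only [mul_assoc]
  set Φ : FreeGroup ℕ →* FreeGroup (Fin 2) :=
    (FreeGroup.lift g).comp (FreeGroup.lift Stmt8Aux.efun) with hΦ
  have hΦinj : Function.Injective Φ :=
    (Stmt8Aux.lift_inj g hgW).comp Stmt8Aux.e_inj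
  have hΦof : ∀ n, Φ (FreeGroup.of n) = θ n := by
    intro n
    rw [hΦ, MonoidHom.comp_apply, FreeGroup.lift_apply_of, hθ n]
    show (FreeGroup.lift g) (((List.range (n+1)).map FreeGroup.of).prod) = _
    rw [map_list_prod, List.map_map]
    congr 1
    apply List.map_congr_left
    intro a _
    exact FreeGroup.lift_apply_of
  have hclos : ∀ S : Set ℕ,
      Subgroup.closure (θ '' S) = (Subgroup.closure (FreeGroup.of '' S)).map Φ := by
    intro S
    rw [MonoidHom.map_closure, Set.image_image]
    congr 1
    rw [show (fun n => Φ (FreeGroup.of n)) = θ from funext hΦof]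
  have hmemθ : ∀ (S : Set ℕ) (n : ℕ), n ∈ S → θ n ∈ Subgroup.closure (θ '' S) :=
    fun S n hn => Subgroup.subset_closure (Set.mem_image_of_mem θ hn)
  have hnc : ∀ m n : ℕ, m ≠ n → θ m * θ n ≠ θ n * θ m := by
    intro m n hmn hc
    apply Stmt8Aux.of_mul_of_ne hmn
    apply hΦinj
    simp only [_root_.map_mul, hΦof]
    exact hc
  refine ⟨⟨θ 1, hmemθ _ 1 odd_one, θ 3, hmemθ _ 3 (by decide), hnc 1 3 (by norm_num)⟩,
    ⟨θ 0, hmemθ _ 0 Even.zero, θ 2, hmemθ _ 2 (by decide), hnc 0 2 (by norm_num)⟩, ?_⟩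
  -- trivial intersection via retraction
  set ρ : FreeGroup ℕ →* FreeGroup ℕ :=
    FreeGroup.lift (fun n => if n % 2 = 1 then FreeGroup.of n else 1) with hρ
  have hfix : ∀ u ∈ Subgroup.closure (FreeGroup.of '' {n : ℕ | Odd n}), ρ u = u := by
    intro u hu
    refine Subgroup.closure_induction (p := fun x _ => ρ x = x) ?_ (map_one ρ) ?_ ?_ hu
    · rintro x ⟨n, hn, rfl⟩
      rw [hρ, FreeGroup.lift_apply_of, if_pos (Nat.odd_iff.mp hn)]
    · intro x y _ _ hx hy
      rw [_root_.map_mul, hx, hy]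
    · intro x _ hx
      rw [_root_.map_inv, hx]
  have hkill : ∀ u ∈ Subgroup.closure (FreeGroup.of '' {n : ℕ | Even n}), ρ u = 1 := by
    intro u hu
    refine Subgroup.closure_induction (p := fun x _ => ρ x = 1) ?_ (map_one ρ) ?_ ?_ hu
    · rintro x ⟨n, hn, rfl⟩
      have : n % 2 = 0 := Nat.even_iff.mp hn
      rw [hρ, FreeGroup.lift_apply_of, if_neg (by omega)]
    · intro x y _ _ hx hy
      rw [_root_.map_mul, hx, hy, one_mul]
    · intro x _ hx
      rw [_root_.map_inv, hx, inv_one]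
  rw [eq_bot_iff]
  intro x hx
  rw [Subgroup.mem_inf, hclos, hclos] at hx
  obtain ⟨h1, h2⟩ := hx
  rw [Subgroup.mem_map] at h1 h2
  obtain ⟨u, hu, hux⟩ := h1
  obtain ⟨v, hv, hvx⟩ := h2
  have huv : u = v := hΦinj (by rw [hux, hvx])
  have : u = 1 := by
    rw [← hfix u hu, huv, hkill v hv]
  rw [Subgroup.mem_bot, ← hux, this, _root_.map_one]
end
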